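/- Let λ be Lebesgue measure on [0,1]. For every u ∈ (0,1), inf{ H(λ | μ) : μ a Borel probability measure on [0,1] with ∫_0^1 x μ(dx) = u } = inf{ H(μ | λ) : μ a Borel probability measure on [0,1] with ∫_0^1 x μ(dx) = u }; that is, the reverse and forward relative-entropy projections onto the set of probability measures on [0,1] with mean u have the same value, namely F^{−1}(u)(u−1) + log(1 + F^{−1}(u) u), where F(λ) = e^λ/(e^λ−1) − 1/λ for λ ≠ 0 and F(0) = 1/2. -/

import Mathlib

open MeasureTheory ProbabilityTheory Filter Topology
open scoped ENNReal NNReal Classical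

/-- Relative entropy (Kullback–Leibler divergence) `H(υ|μ)`, as an extended real:
`∫ log(dυ/dμ) dυ` if `υ ≪ μ` (and the integral exists), and `+∞` otherwise. -/
noncomputable def relEnt {α : Type*} [MeasurableSpace α] (υ μ : Measure α) : EReal :=
  if υ ≪ μ ∧ Integrable (llr υ μ) υ then ((∫ x, llr υ μ x ∂υ : ℝ) : EReal) else ⊤

/-- The J-divergence `J(μ,ν) = inf { H(υ|μ) + H(υ|ν) : υ a probability measure }`. -/
noncomputable def Jdiv {α : Type*} [MeasurableSpace α] (μ ν : Measure α) : EReal :=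
  ⨅ (υ : Measure α) (_ : IsProbabilityMeasure υ), relEnt υ μ + relEnt υ ν

/-- The function F(λ) = e^λ/(e^λ − 1) − 1/λ for λ ≠ 0, F(0) = 1/2; it is a continuous
strictly increasing bijection of ℝ onto (0,1). -/
noncomputable def Ffun (l : ℝ) : ℝ :=
  if l = 0 then 1 / 2 else Real.exp l / (Real.exp l - 1) - 1 / l


section Aux
open Real MeasureTheory

lemma lam_prob : IsProbabilityMeasure (volume.restrict (Set.Icc (0:ℝ) 1)) :=
  ⟨by simp [Real.volume_Icc]⟩

lemma integral_lam (f : ℝ → ℝ) :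
    ∫ x, f x ∂(volume.restrict (Set.Icc (0:ℝ) 1)) = ∫ x in (0:ℝ)..1, f x := by
  rw [intervalIntegral.integral_of_le zero_le_one, ← MeasureTheory.integral_Icc_eq_integral_Ioc]

lemma ae_mem_lam : ∀ᵐ x ∂(volume.restrict (Set.Icc (0:ℝ) 1)), x ∈ Set.Icc (0:ℝ) 1 :=
  ae_restrict_mem measurableSet_Icc

lemma cont_param (g : ℝ → ℝ) (hg : Continuous g) (hgb : ∀ x ∈ Set.Icc (0:ℝ) 1, |g x| ≤ 1) :
    Continuous (fun s : ℝ => ∫ x, g x * exp (s*x) ∂(volume.restrict (Set.Icc (0:ℝ) 1))) := by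
  rw [continuous_iff_continuousAt]
  intro s₀
  apply continuousAt_of_dominated (bound := fun _ => exp (|s₀|+1))
  · exact Eventually.of_forall fun s =>
      (hg.mul (Real.continuous_exp.comp (continuous_const.mul continuous_id))).aestronglyMeasurable
  · rw [Metric.eventually_nhds_iff]
    refine ⟨1, one_pos, fun s hs => ?_⟩
    filter_upwards [ae_mem_lam] with x hx
    have hxa : |x| ≤ 1 := abs_le.mpr ⟨by linarith [hx.1], hx.2⟩
    have hsa : |s| ≤ |s₀| + 1 := by
      have := abs_sub_abs_le_abs_sub s s₀
      rw [Real.dist_eq] at hs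
      linarith [hs.le]
    have h2 : s*x ≤ |s₀|+1 := by
      calc s*x ≤ |s*x| := le_abs_self _
      _ = |s| * |x| := abs_mul _ _
      _ ≤ (|s₀|+1) * 1 := mul_le_mul hsa hxa (abs_nonneg _) (by positivity)
      _ = |s₀|+1 := mul_one _
    calc ‖g x * exp (s*x)‖ = |g x| * exp (s*x) := by
          rw [norm_eq_abs, abs_mul, abs_of_nonneg (exp_pos _).le]
    _ ≤ 1 * exp (|s₀|+1) := by
          exact mul_le_mul (hgb x hx) (exp_le_exp.mpr h2) (exp_pos _).le one_pos.le
    _ = exp (|s₀|+1) := one_mul _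
  · exact integrable_const _
  · exact Eventually.of_forall fun x => (continuousAt_const.mul
      ((Real.continuous_exp.comp (continuous_id.mul continuous_const)).continuousAt))

lemma int_exp_mul (t : ℝ) (ht : t ≠ 0) :
    ∫ x in (0:ℝ)..1, exp (t*x) = (exp t - 1)/t := by
  have h : ∀ x ∈ Set.uIcc (0:ℝ) 1, HasDerivAt (fun y => exp (t*y)/t) (exp (t*x)) x := by
    intro x _
    have h1 : HasDerivAt (fun y : ℝ => t*y) t x := by
      simpa using (hasDerivAt_id x).const_mul t
    have h2 : HasDerivAt (fun y => exp (t*y)) (exp (t*x) * t) x :=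
      (Real.hasDerivAt_exp (t*x)).comp x h1
    have := h2.div_const t
    rwa [mul_div_cancel_right₀ _ ht] at this
  have hci : IntervalIntegrable (fun x => exp (t*x)) volume 0 1 :=
    (Real.continuous_exp.comp (continuous_const.mul continuous_id)).intervalIntegrable 0 1
  rw [intervalIntegral.integral_eq_sub_of_hasDerivAt h hci]
  simp [sub_div]

lemma int_x_exp_mul (t : ℝ) (ht : t ≠ 0) :
    ∫ x in (0:ℝ)..1, x * exp (t*x) = (exp t * (t-1) + 1)/t^2 := by
  have h : ∀ x ∈ Set.uIcc (0:ℝ) 1,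
      HasDerivAt (fun y => exp (t*y) * (t*y-1) / t^2) (x * exp (t*x)) x := by
    intro x _
    have h1 : HasDerivAt (fun y : ℝ => t*y) t x := by
      simpa using (hasDerivAt_id x).const_mul t
    have h2 : HasDerivAt (fun y => exp (t*y)) (exp (t*x) * t) x :=
      (Real.hasDerivAt_exp (t*x)).comp x h1
    have h3 : HasDerivAt (fun y : ℝ => t*y - 1) t x := h1.sub_const 1
    have h4 := (h2.mul h3).div_const (t^2)
    refine HasDerivAt.congr_deriv h4 ?_
    field_simp
    ring
  have hci : IntervalIntegrable (fun x => x * exp (t*x)) volume 0 1 :=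
    (continuous_id.mul (Real.continuous_exp.comp (continuous_const.mul continuous_id))).intervalIntegrable 0 1
  rw [intervalIntegral.integral_eq_sub_of_hasDerivAt h hci]
  field_simp
  simp

lemma int_inv_lin (t a : ℝ) (ht : t ≠ 0) (hw : ∀ x ∈ Set.Icc (0:ℝ) 1, 0 < a - t*x) :
    ∫ x in (0:ℝ)..1, (a - t*x)⁻¹ = (log a - log (a - t))/t := by
  have h : ∀ x ∈ Set.uIcc (0:ℝ) 1,
      HasDerivAt (fun y => -(log (a - t*y))/t) ((a - t*x)⁻¹) x := by
    intro x hx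
    rw [Set.uIcc_of_le zero_le_one] at hx
    have hwx : a - t*x ≠ 0 := (hw x hx).ne'
    have h1 : HasDerivAt (fun y : ℝ => a - t*y) (-t) x := by
      simpa using ((hasDerivAt_id x).const_mul t).const_sub a
    have h2 : HasDerivAt (fun y => log (a - t*y)) ((a - t*x)⁻¹ * (-t)) x :=
      ((Real.hasDerivAt_log hwx).comp x h1 :)
    have h3 := (h2.neg).div_const t
    refine HasDerivAt.congr_deriv h3 ?_
    field_simp
  have hcont : ContinuousOn (fun x => (a - t*x)⁻¹) (Set.uIcc (0:ℝ) 1) := by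
    rw [Set.uIcc_of_le zero_le_one]
    exact ((continuous_const.sub (continuous_const.mul continuous_id)).continuousOn).inv₀
      (fun x hx => (hw x hx).ne')
  rw [intervalIntegral.integral_eq_sub_of_hasDerivAt h (hcont.intervalIntegrable)]
  have h0 : a - t*0 = a := by ring_nf
  have h1 : a - t*1 = a - t := by ring_nf
  rw [h0, h1]
  ring

lemma int_log_lin (t a : ℝ) (ht : t ≠ 0) (hw : ∀ x ∈ Set.Icc (0:ℝ) 1, 0 < a - t*x) :
    ∫ x in (0:ℝ)..1, log (a - t*x)
      = (a*(log a - 1) - (a-t)*(log (a-t) - 1))/t := by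
  have h : ∀ x ∈ Set.uIcc (0:ℝ) 1,
      HasDerivAt (fun y => -((a - t*y)*(log (a - t*y) - 1))/t) (log (a - t*x)) x := by
    intro x hx
    rw [Set.uIcc_of_le zero_le_one] at hx
    have hwx : a - t*x ≠ 0 := (hw x hx).ne'
    have h1 : HasDerivAt (fun y : ℝ => a - t*y) (-t) x := by
      simpa using ((hasDerivAt_id x).const_mul t).const_sub a
    have h2 : HasDerivAt (fun y => log (a - t*y)) ((a - t*x)⁻¹ * (-t)) x :=
      ((Real.hasDerivAt_log hwx).comp x h1 :)
    have h3 : HasDerivAt (fun y => (a - t*y)*(log (a - t*y) - 1))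
        ((-t)*(log (a - t*x) - 1) + (a - t*x)*((a - t*x)⁻¹ * (-t))) x :=
      h1.mul (h2.sub_const 1)
    have h4 := (h3.neg).div_const t
    refine HasDerivAt.congr_deriv h4 ?_
    field_simp
    ring
  have hcont : ContinuousOn (fun x => log (a - t*x)) (Set.uIcc (0:ℝ) 1) := by
    rw [Set.uIcc_of_le zero_le_one]
    exact Real.continuousOn_log.comp
      ((continuous_const.sub (continuous_const.mul continuous_id)).continuousOn)
      (fun x hx => by simp [(hw x hx).ne'])
  rw [intervalIntegral.integral_eq_sub_of_hasDerivAt h (hcont.intervalIntegrable)]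
  have h0 : a - t*0 = a := by ring_nf
  have h1 : a - t*1 = a - t := by ring_nf
  rw [h0, h1]
  ring

lemma int_exp_lam (s : ℝ) (hs : s ≠ 0) :
    ∫ x, exp (s*x) ∂(volume.restrict (Set.Icc (0:ℝ) 1)) = (exp s - 1)/s := by
  rw [integral_lam, int_exp_mul s hs]

lemma int_exp_lam0 : ∫ x, exp ((0:ℝ)*x) ∂(volume.restrict (Set.Icc (0:ℝ) 1)) = 1 := by
  simp [integral_lam]

lemma int_xexp_lam (s : ℝ) (hs : s ≠ 0) :
    ∫ x, x * exp (s*x) ∂(volume.restrict (Set.Icc (0:ℝ) 1)) = (exp s * (s-1) + 1)/s^2 := by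
  rw [integral_lam, int_x_exp_mul s hs]

lemma int_xexp_lam0 : ∫ x, x * exp ((0:ℝ)*x) ∂(volume.restrict (Set.Icc (0:ℝ) 1)) = 1/2 := by
  simp only [zero_mul, Real.exp_zero, mul_one]
  rw [integral_lam]
  simp [integral_id]

lemma exp_int_pos (s : ℝ) : (0:ℝ) < ∫ x, exp (s*x) ∂(volume.restrict (Set.Icc (0:ℝ) 1)) := by
  have := lam_prob
  refine integral_exp_pos (μ := volume.restrict (Set.Icc (0:ℝ) 1)) (f := fun x => s*x) ?_
  exact (Real.continuous_exp.comp (continuous_const.mul continuous_id)).integrableOn_Icc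

lemma G_eq_Ffun (s : ℝ) :
    (∫ x, x * exp (s*x) ∂(volume.restrict (Set.Icc (0:ℝ) 1)))
      / (∫ x, exp (s*x) ∂(volume.restrict (Set.Icc (0:ℝ) 1))) = Ffun s := by
  rcases eq_or_ne s 0 with rfl | hs
  · rw [int_exp_lam0, int_xexp_lam0, Ffun]
    norm_num
  · rw [int_exp_lam s hs, int_xexp_lam s hs, Ffun, if_neg hs]
    have hE : exp s - 1 ≠ 0 := by
      simp [sub_ne_zero, Real.exp_eq_one_iff, hs]
    field_simp
    ring

lemma Ffun_continuous : Continuous Ffun := by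
  have h1 : Continuous (fun s : ℝ => ∫ x, x * exp (s*x) ∂(volume.restrict (Set.Icc (0:ℝ) 1))) :=
    cont_param id continuous_id (fun x hx => by simp only [id_eq]; exact abs_le.mpr ⟨by linarith [hx.1], hx.2⟩)
  have h2 : Continuous (fun s : ℝ => ∫ x, exp (s*x) ∂(volume.restrict (Set.Icc (0:ℝ) 1))) := by
    have := cont_param 1 continuous_const (fun x _ => by norm_num)
    simpa using this
  have := h1.div h2 (fun s => (exp_int_pos s).ne')
  exact (funext G_eq_Ffun : _ = Ffun) ▸ this

lemma Ffun_atTop : Tendsto Ffun atTop (𝓝 1) := by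
  have h : ∀ᶠ s in atTop, ((1 - exp (-s))⁻¹ - 1/s : ℝ) = Ffun s := by
    filter_upwards [eventually_gt_atTop (0:ℝ)] with s hs
    rw [Ffun, if_neg hs.ne']
    have hE : exp s - 1 ≠ 0 := by simp [sub_ne_zero, Real.exp_eq_one_iff, hs.ne']
    have hE' : 1 - exp (-s) ≠ 0 := by
      have : exp (-s) < 1 := by simpa using Real.exp_lt_one_iff.mpr (neg_neg_iff_pos.mpr hs)
      linarith
    rw [Real.exp_neg] at hE' ⊢
    field_simp
  refine Tendsto.congr' h ?_
  have h1 : Tendsto (fun s : ℝ => (1 - exp (-s))⁻¹) atTop (𝓝 1) := by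
    have := (Real.tendsto_exp_neg_atTop_nhds_zero).const_sub 1
    simpa [Function.comp_def] using ((continuousAt_inv₀ (by norm_num : (1:ℝ) - 0 ≠ 0)).tendsto.comp (by simpa using this))
  have h2 : Tendsto (fun s : ℝ => 1/s) atTop (𝓝 0) := by
    simpa using tendsto_inv_atTop_zero (𝕜 := ℝ)
  simpa using h1.sub h2

lemma Ffun_atBot : Tendsto Ffun atBot (𝓝 0) := by
  have h : ∀ᶠ s in atBot, (exp s / (exp s - 1) - 1/s : ℝ) = Ffun s := by
    filter_upwards [eventually_lt_atBot (0:ℝ)] with s hs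
    rw [Ffun, if_neg hs.ne]
  refine Tendsto.congr' h ?_
  have h1 : Tendsto (fun s : ℝ => exp s / (exp s - 1)) atBot (𝓝 0) := by
    have hnum : Tendsto (fun s : ℝ => exp s) atBot (𝓝 0) := Real.tendsto_exp_atBot
    have hden : Tendsto (fun s : ℝ => exp s - 1) atBot (𝓝 (-1)) := by
      simpa using hnum.sub_const 1
    simpa [Pi.div_def] using hnum.div hden (by norm_num)
  have h2 : Tendsto (fun s : ℝ => 1/s) atBot (𝓝 0) := by
    have h3 := ((tendsto_inv_atTop_zero (𝕜 := ℝ)).comp tendsto_neg_atBot_atTop).neg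
    simpa [Function.comp, inv_neg, one_div] using h3
  simpa using h1.sub h2

lemma Ffun_range {u : ℝ} (hu : u ∈ Set.Ioo (0:ℝ) 1) : u ∈ Set.range Ffun := by
  obtain ⟨a, ha⟩ := (Ffun_atBot.eventually (eventually_lt_nhds hu.1)).exists
  obtain ⟨b, hb⟩ := (Ffun_atTop.eventually (eventually_gt_nhds hu.2)).exists
  exact intermediate_value_univ a b Ffun_continuous ⟨ha.le, hb.le⟩


lemma exp_sub_one_ne {t : ℝ} (ht : t ≠ 0) : exp t - 1 ≠ 0 := by
  simp [sub_ne_zero, Real.exp_eq_one_iff, ht]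

lemma div_exp_sub_one_pos {t : ℝ} (ht : t ≠ 0) : 0 < t/(exp t - 1) := by
  rcases ht.lt_or_gt with h | h
  · exact div_pos_of_neg_of_neg h (by simpa using Real.exp_lt_one_iff.mpr h)
  · exact div_pos h (by nlinarith [Real.add_one_le_exp t])

lemma key1 {t u : ℝ} (ht : t ≠ 0) (hu : exp t/(exp t - 1) - 1/t = u) :
    1 + t*u - t = t/(exp t - 1) := by
  subst hu
  have hE := exp_sub_one_ne ht
  field_simp
  ring

lemma key_pos1 {t u : ℝ} (ht : t ≠ 0) (hu : exp t/(exp t - 1) - 1/t = u) :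
    0 < 1 + t*u - t := (key1 ht hu) ▸ div_exp_sub_one_pos ht

lemma key2 {t u : ℝ} (ht : t ≠ 0) (hu : exp t/(exp t - 1) - 1/t = u) :
    1 + t*u = exp t * (1 + t*u - t) := by
  rw [key1 ht hu]
  subst hu
  have hE := exp_sub_one_ne ht
  field_simp
  ring

lemma key_pos2 {t u : ℝ} (ht : t ≠ 0) (hu : exp t/(exp t - 1) - 1/t = u) :
    0 < 1 + t*u := (key2 ht hu) ▸ mul_pos (exp_pos t) (key_pos1 ht hu)

lemma key3 {t u : ℝ} (ht : t ≠ 0) (hu : exp t/(exp t - 1) - 1/t = u) :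
    log (1 + t*u) = t + log (1 + t*u - t) := by
  conv_lhs => rw [key2 ht hu]
  rw [Real.log_mul (exp_pos t).ne' (key_pos1 ht hu).ne', Real.log_exp]

lemma w_pos {t u : ℝ} (ht : t ≠ 0) (hu : exp t/(exp t - 1) - 1/t = u) :
    ∀ x ∈ Set.Icc (0:ℝ) 1, 0 < 1 + t*u - t*x := by
  intro x hx
  rcases le_or_gt t 0 with h | h
  · have : t*x ≤ 0 := mul_nonpos_of_nonpos_of_nonneg h hx.1
    nlinarith [key_pos2 ht hu]
  · have : t*x ≤ t*1 := by nlinarith [hx.2]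
    nlinarith [key_pos1 ht hu]

lemma val_fwd {t u : ℝ} (ht : t ≠ 0) (hu : exp t/(exp t - 1) - 1/t = u) :
    t*u - log ((exp t - 1)/t) = t*(u-1) + log (1 + t*u) := by
  have h1 : (exp t - 1)/t = (1 + t*u - t)⁻¹ := by
    rw [key1 ht hu, inv_div]
  rw [h1, Real.log_inv, key3 ht hu]
  ring

lemma val_mean {t u : ℝ} (ht : t ≠ 0) (hu : exp t/(exp t - 1) - 1/t = u) :
    (exp t*(t-1)+1)/t^2 = u * ((exp t - 1)/t) := by
  subst hu
  have hE := exp_sub_one_ne ht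
  field_simp
  ring

lemma val_I1 {t u : ℝ} (ht : t ≠ 0) (hu : exp t/(exp t - 1) - 1/t = u) :
    (log (1 + t*u) - log (1 + t*u - t))/t = 1 := by
  rw [key3 ht hu]; field_simp; ring

lemma val_log {t u : ℝ} (ht : t ≠ 0) (hu : exp t/(exp t - 1) - 1/t = u) :
    ((1+t*u)*(log (1+t*u) - 1) - (1+t*u-t)*(log (1+t*u-t) - 1))/t
      = t*(u-1) + log (1 + t*u) := by
  rw [key3 ht hu]
  field_simp
  ring

lemma gibbs {α : Type*} [MeasurableSpace α] (μ ν : Measure α) [IsProbabilityMeasure μ]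
    [IsProbabilityMeasure ν] (hμν : μ ≪ ν) (h : Integrable (llr μ ν) μ) :
    0 ≤ ∫ x, llr μ ν x ∂μ := by
  set D := μ.rnDeriv ν with hD
  have hQmeas : AEMeasurable (fun x => (D x)⁻¹) μ := (Measure.measurable_rnDeriv μ ν).inv.aemeasurable
  have hQle : ∫⁻ x, (D x)⁻¹ ∂μ ≤ 1 := by
    rw [← MeasureTheory.lintegral_rnDeriv_mul hμν (f := fun x => (D x)⁻¹) ((Measure.measurable_rnDeriv μ ν).inv.aemeasurable)]
    calc ∫⁻ x, D x * (D x)⁻¹ ∂ν ≤ ∫⁻ _, 1 ∂ν := lintegral_mono fun x => ENNReal.mul_inv_le_one _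
    _ = 1 := by simp
  have hQlt : ∀ᵐ x ∂μ, (D x)⁻¹ < ⊤ := by
    filter_upwards [Measure.rnDeriv_pos hμν] with x hx
    simp [ENNReal.inv_lt_top, hD, hx]
  have hQint : Integrable (fun x => ((D x)⁻¹).toReal) μ :=
    integrable_toReal_of_lintegral_ne_top hQmeas (lt_of_le_of_lt hQle ENNReal.one_lt_top).ne
  have hQval : ∫ x, ((D x)⁻¹).toReal ∂μ ≤ 1 := by
    rw [integral_toReal hQmeas hQlt]
    exact ENNReal.toReal_le_of_le_ofReal one_pos.le (by simpa using hQle)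
  have hpt : ∀ᵐ x ∂μ, 1 - ((D x)⁻¹).toReal ≤ llr μ ν x := by
    filter_upwards [Measure.rnDeriv_pos hμν, hμν.ae_le (Measure.rnDeriv_lt_top μ ν)]
      with x hx hx'
    have hy : 0 < (D x).toReal := ENNReal.toReal_pos hx.ne' hx'.ne
    have hlog : log ((D x).toReal)⁻¹ ≤ ((D x).toReal)⁻¹ - 1 :=
      Real.log_le_sub_one_of_pos (inv_pos.mpr hy)
    rw [Real.log_inv] at hlog
    rw [ENNReal.toReal_inv]
    simp only [llr]
    linarith
  calc (0:ℝ) = 1 - 1 := by ring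
  _ ≤ ∫ x, (1 - ((D x)⁻¹).toReal) ∂μ := by
      rw [integral_sub (integrable_const 1) hQint]
      simp only [integral_const, probReal_univ, ENNReal.toReal_one, smul_eq_mul, one_mul]
      linarith
  _ ≤ ∫ x, llr μ ν x ∂μ := integral_mono_ae ((integrable_const 1).sub hQint) h hpt

notation "lam" => volume.restrict (Set.Icc (0:ℝ) 1)

lemma ae_mem_of_prob {μ : Measure ℝ} [IsProbabilityMeasure μ]
    (h1 : μ (Set.Icc (0:ℝ) 1) = 1) : ∀ᵐ x ∂μ, x ∈ Set.Icc (0:ℝ) 1 := by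
  rw [ae_iff]
  have : {x : ℝ | ¬ x ∈ Set.Icc (0:ℝ) 1} = (Set.Icc (0:ℝ) 1)ᶜ := rfl
  rw [this, prob_compl_eq_zero_iff measurableSet_Icc]
  exact h1

lemma integrable_of_bdd {μ : Measure ℝ} [IsProbabilityMeasure μ]
    (h1 : μ (Set.Icc (0:ℝ) 1) = 1) {g : ℝ → ℝ} (hg : AEStronglyMeasurable g μ)
    {C : ℝ} (hC : ∀ x ∈ Set.Icc (0:ℝ) 1, ‖g x‖ ≤ C) : Integrable g μ := by
  refine (integrable_const C).mono' hg ?_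
  filter_upwards [ae_mem_of_prob h1] with x hx using hC x hx

lemma exp_tilted_integrable (t : ℝ) : Integrable (fun x => exp (t*x)) lam :=
  (Real.continuous_exp.comp (continuous_const.mul continuous_id)).integrableOn_Icc

lemma llr_self_zero : llr lam lam =ᵐ[lam] 0 := by
  filter_upwards [Measure.rnDeriv_self (volume.restrict (Set.Icc (0:ℝ) 1))] with x hx
  simp [llr, hx]

lemma hZ_id {t u : ℝ} (ht : Ffun t = u) :
    t*u - log (∫ x, exp (t*x) ∂lam) = t*(u-1) + log (1+t*u) := by
  rcases eq_or_ne t 0 with rfl | htne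
  · have hu : u = 1/2 := by simpa [Ffun] using ht.symm
    rw [int_exp_lam0]
    simp
  · have hu' : exp t/(exp t - 1) - 1/t = u := by
      rw [← ht]; simp [Ffun, htne]
    rw [int_exp_lam t htne]
    exact val_fwd htne hu'

lemma mean_id {t u : ℝ} (ht : Ffun t = u) :
    ∫ x, x * exp (t*x) ∂lam = u * ∫ x, exp (t*x) ∂lam := by
  rcases eq_or_ne t 0 with rfl | htne
  · have hu : u = 1/2 := by simpa [Ffun] using ht.symm
    rw [int_exp_lam0, int_xexp_lam0, hu]
    norm_num
  · have hu' : exp t/(exp t - 1) - 1/t = u := by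
      rw [← ht]; simp [Ffun, htne]
    rw [int_exp_lam t htne, int_xexp_lam t htne]
    exact val_mean htne hu'

lemma meas_mul (t : ℝ) : AEStronglyMeasurable (fun x : ℝ => t*x) lam :=
  (continuous_const.mul continuous_id).aestronglyMeasurable

lemma fwd_lb {t u : ℝ} (ht : Ffun t = u) {μ : Measure ℝ} [IsProbabilityMeasure μ]
    (h1 : μ (Set.Icc (0:ℝ) 1) = 1) (h3 : ∫ x, x ∂μ = u) (hac : μ ≪ lam)
    (hint : Integrable (llr μ lam) μ) :
    t*(u-1) + log (1+t*u) ≤ ∫ x, llr μ lam x ∂μ := by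
  have hprob := lam_prob
  have hfν := exp_tilted_integrable t
  have hfμ : Integrable (fun x => t*x) μ := by
    refine integrable_of_bdd h1 ((continuous_const.mul continuous_id).aestronglyMeasurable)
      (C := |t|) ?_
    intro x hx
    rw [Real.norm_eq_abs, abs_mul]
    calc |t| * |x| ≤ |t| * 1 := by
          exact mul_le_mul_of_nonneg_left (abs_le.mpr ⟨by linarith [hx.1], hx.2⟩) (abs_nonneg t)
    _ = |t| := mul_one _
  have hmean : ∫ x, t*x ∂μ = t*u := by rw [integral_const_mul, h3]
  have hacc : μ ≪ Measure.tilted lam (fun x => t*x) := hac.trans (absolutelyContinuous_tilted hfν)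
  have hνt : IsProbabilityMeasure (Measure.tilted lam (fun x => t*x)) := isProbabilityMeasure_tilted hfν
  have hint2 : Integrable (llr μ (Measure.tilted lam fun x => t*x)) μ :=
    integrable_llr_tilted_right hac hfμ hint hfν
  have h0 := gibbs μ _ hacc hint2
  rw [integral_llr_tilted_right hac hfμ hfν hint, hmean] at h0
  have hid := hZ_id ht
  linarith

lemma tilted_Icc_one {f : ℝ → ℝ} (hf : Integrable (fun x => exp (f x)) lam) :
    (Measure.tilted lam f) (Set.Icc (0:ℝ) 1) = 1 := by
  have hprob := lam_prob
  have hP : IsProbabilityMeasure (Measure.tilted lam f) := isProbabilityMeasure_tilted hf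
  rw [← prob_compl_eq_zero_iff measurableSet_Icc]
  refine tilted_absolutelyContinuous lam f ?_
  rw [Measure.restrict_apply (measurableSet_Icc.compl)]
  simp

lemma fwd_wit {t u : ℝ} (ht : Ffun t = u) :
    ∃ μ : Measure ℝ, IsProbabilityMeasure μ ∧ μ (Set.Icc (0:ℝ) 1) = 1 ∧ (∫ x, x ∂μ) = u ∧
      μ ≪ lam ∧ Integrable (llr μ lam) μ ∧
      ∫ x, llr μ lam x ∂μ = t*(u-1) + log (1+t*u) := by
  have hprob := lam_prob
  have hfν := exp_tilted_integrable t
  refine ⟨Measure.tilted lam (fun x => t*x), isProbabilityMeasure_tilted hfν, tilted_Icc_one hfν, ?_, ?_, ?_, ?_⟩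
  · -- mean
    rw [integral_tilted]
    have hZpos := exp_int_pos t
    simp_rw [smul_eq_mul]
    have : ∀ x : ℝ, exp (t*x) / (∫ y, exp (t*y) ∂lam) * x
        = (x * exp (t*x)) / (∫ y, exp (t*y) ∂lam) := fun x => by ring
    simp_rw [this]
    rw [integral_div, mean_id ht, mul_div_assoc, div_self hZpos.ne', mul_one]
  · exact tilted_absolutelyContinuous lam _
  · -- integrable llr
    have hP : IsProbabilityMeasure (Measure.tilted lam (fun x => t*x)) := isProbabilityMeasure_tilted hfν
    have hllr : llr (Measure.tilted lam fun x => t*x) lam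
        =ᵐ[Measure.tilted lam (fun x => t*x)] fun x => t*x - log (∫ y, exp (t*y) ∂lam) := by
      refine (tilted_absolutelyContinuous lam _).ae_le ?_
      have h1 := llr_tilted_left (μ := lam) (ν := lam) Measure.AbsolutelyContinuous.rfl hfν
        ((continuous_const.mul continuous_id).aemeasurable)
      filter_upwards [h1, llr_self_zero] with x hx hx0
      rw [hx, hx0]
      simp
    refine Integrable.congr ?_ hllr.symm
    refine integrable_of_bdd (tilted_Icc_one hfν)
      (((continuous_const.mul continuous_id).sub continuous_const).aestronglyMeasurable)
      (C := |t| + |log (∫ y, exp (t*y) ∂lam)|) ?_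
    intro x hx
    have : |t*x| ≤ |t| := by
      rw [abs_mul]
      calc |t| * |x| ≤ |t| * 1 :=
            mul_le_mul_of_nonneg_left (abs_le.mpr ⟨by linarith [hx.1], hx.2⟩) (abs_nonneg t)
      _ = |t| := mul_one _
    calc ‖t*x - log (∫ y, exp (t*y) ∂lam)‖ ≤ |t*x| + |log (∫ y, exp (t*y) ∂lam)| := abs_sub _ _
    _ ≤ |t| + |log (∫ y, exp (t*y) ∂lam)| := by linarith
  · -- value
    have hP : IsProbabilityMeasure (Measure.tilted lam (fun x => t*x)) := isProbabilityMeasure_tilted hfν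
    have hllr : llr (Measure.tilted lam fun x => t*x) lam
        =ᵐ[Measure.tilted lam (fun x => t*x)] fun x => t*x - log (∫ y, exp (t*y) ∂lam) := by
      refine (tilted_absolutelyContinuous lam _).ae_le ?_
      have h1 := llr_tilted_left (μ := lam) (ν := lam) Measure.AbsolutelyContinuous.rfl hfν
        ((continuous_const.mul continuous_id).aemeasurable)
      filter_upwards [h1, llr_self_zero] with x hx hx0
      rw [hx, hx0]
      simp
    rw [integral_congr_ae hllr]
    have hmean2 : ∫ x, x ∂(Measure.tilted lam (fun x => t*x)) = u := by
      rw [integral_tilted]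
      have hZpos := exp_int_pos t
      simp_rw [smul_eq_mul]
      have : ∀ x : ℝ, exp (t*x) / (∫ y, exp (t*y) ∂lam) * x
          = (x * exp (t*x)) / (∫ y, exp (t*y) ∂lam) := fun x => by ring
      simp_rw [this]
      rw [integral_div, mean_id ht, mul_div_assoc, div_self hZpos.ne', mul_one]
    have hxint : Integrable (fun x : ℝ => t*x) (Measure.tilted lam (fun x => t*x)) := by
      refine integrable_of_bdd (tilted_Icc_one hfν)
        ((continuous_const.mul continuous_id).aestronglyMeasurable) (C := |t|) ?_
      intro x hx
      rw [Real.norm_eq_abs, abs_mul]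
      calc |t| * |x| ≤ |t| * 1 :=
            mul_le_mul_of_nonneg_left (abs_le.mpr ⟨by linarith [hx.1], hx.2⟩) (abs_nonneg t)
      _ = |t| := mul_one _
    rw [integral_sub hxint (integrable_const _), integral_const]
    simp only [probReal_univ, ENNReal.toReal_one, smul_eq_mul, one_mul]
    rw [integral_const_mul, hmean2]
    exact hZ_id ht

-- ### Reverse side auxiliary facts

lemma w_pos' {t u : ℝ} (ht : Ffun t = u) :
    ∀ x ∈ Set.Icc (0:ℝ) 1, 0 < 1 + t*u - t*x := by
  rcases eq_or_ne t 0 with rfl | htne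
  · intro x _; norm_num
  · have hu' : exp t/(exp t - 1) - 1/t = u := by rw [← ht]; simp [Ffun, htne]
    exact w_pos htne hu'

lemma w_cont {t u : ℝ} : Continuous (fun x : ℝ => 1 + t*u - t*x) :=
  continuous_const.sub (continuous_const.mul continuous_id)

lemma logw_integrable {t u : ℝ} (ht : Ffun t = u) :
    Integrable (fun x => log (1 + t*u - t*x)) lam := by
  refine ContinuousOn.integrableOn_Icc ?_
  exact Real.continuousOn_log.comp w_cont.continuousOn
    (fun x hx => (w_pos' ht x hx).ne')

lemma logw_value {t u : ℝ} (ht : Ffun t = u) :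
    ∫ x, log (1 + t*u - t*x) ∂lam = t*(u-1) + log (1+t*u) := by
  rcases eq_or_ne t 0 with rfl | htne
  · simp
  · have hu' : exp t/(exp t - 1) - 1/t = u := by rw [← ht]; simp [Ffun, htne]
    rw [integral_lam, int_log_lin t (1+t*u) htne (fun x hx => w_pos' ht x hx)]
    exact val_log htne hu'

lemma w_integral_one {μ : Measure ℝ} [IsProbabilityMeasure μ] {t u : ℝ}
    (h1 : μ (Set.Icc (0:ℝ) 1) = 1) (h3 : ∫ x, x ∂μ = u) :
    ∫ x, (1 + t*u - t*x) ∂μ = 1 := by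
  have hfμ : Integrable (fun x => t*x) μ := by
    refine integrable_of_bdd h1 ((continuous_const.mul continuous_id).aestronglyMeasurable)
      (C := |t|) ?_
    intro x hx
    rw [Real.norm_eq_abs, abs_mul]
    calc |t| * |x| ≤ |t| * 1 :=
          mul_le_mul_of_nonneg_left (abs_le.mpr ⟨by linarith [hx.1], hx.2⟩) (abs_nonneg t)
    _ = |t| := mul_one _
  rw [integral_sub (integrable_const _) hfμ, integral_const, integral_const_mul, h3]
  simp

lemma rev_lb {t u : ℝ} (ht : Ffun t = u) {μ : Measure ℝ} [IsProbabilityMeasure μ]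
    (h1 : μ (Set.Icc (0:ℝ) 1) = 1) (h3 : ∫ x, x ∂μ = u) (hac : lam ≪ μ)
    (hint : Integrable (llr lam μ) lam) :
    t*(u-1) + log (1+t*u) ≤ ∫ x, llr lam μ x ∂lam := by
  have hprob := lam_prob
  set w : ℝ → ℝ := fun x => 1 + t*u - t*x with hw
  set D := (volume.restrict (Set.Icc (0:ℝ) 1)).rnDeriv μ with hD
  have hDmeas : Measurable D := Measure.measurable_rnDeriv _ _
  have hwmeas : Measurable w := w_cont.measurable
  set Q : ℝ → ENNReal := fun x => ENNReal.ofReal (w x) / D x with hQ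
  have hQmeasμ : AEMeasurable Q μ := (hwmeas.ennreal_ofReal.div hDmeas).aemeasurable
  have hQmeas : AEMeasurable Q lam := (hwmeas.ennreal_ofReal.div hDmeas).aemeasurable
  have hDpos : ∀ᵐ x ∂lam, 0 < D x := Measure.rnDeriv_pos hac
  have hDlt : ∀ᵐ x ∂lam, D x < ⊤ := hac.ae_le (Measure.rnDeriv_lt_top lam μ)
  have hwint : Integrable w μ := by
    refine integrable_of_bdd h1 w_cont.aestronglyMeasurable (C := |1+t*u| + |t|) ?_
    intro x hx
    have : |t*x| ≤ |t| := by
      rw [abs_mul]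
      calc |t| * |x| ≤ |t| * 1 :=
            mul_le_mul_of_nonneg_left (abs_le.mpr ⟨by linarith [hx.1], hx.2⟩) (abs_nonneg t)
      _ = |t| := mul_one _
    calc ‖w x‖ = |(1+t*u) - t*x| := rfl
    _ ≤ |1+t*u| + |t*x| := abs_sub _ _
    _ ≤ |1+t*u| + |t| := by linarith
  have hwnn : 0 ≤ᵐ[μ] w := by
    filter_upwards [ae_mem_of_prob h1] with x hx using (w_pos' ht x hx).le
  have hQle : ∫⁻ x, Q x ∂lam ≤ 1 := by
    rw [← MeasureTheory.lintegral_rnDeriv_mul hac hQmeasμ]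
    calc ∫⁻ x, D x * Q x ∂μ ≤ ∫⁻ x, ENNReal.ofReal (w x) ∂μ := by
          refine lintegral_mono fun x => ?_
          exact ENNReal.mul_div_le
    _ = ENNReal.ofReal (∫ x, w x ∂μ) := (ofReal_integral_eq_lintegral_ofReal hwint hwnn).symm
    _ = 1 := by rw [w_integral_one h1 h3]; simp
  have hQlt : ∀ᵐ x ∂lam, Q x < ⊤ := by
    filter_upwards [hDpos] with x hx
    exact ENNReal.div_lt_top ENNReal.ofReal_ne_top hx.ne'
  have hQint : Integrable (fun x => (Q x).toReal) lam :=
    integrable_toReal_of_lintegral_ne_top hQmeas (lt_of_le_of_lt hQle ENNReal.one_lt_top).ne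
  have hQval : ∫ x, (Q x).toReal ∂lam ≤ 1 := by
    rw [integral_toReal hQmeas hQlt]
    exact ENNReal.toReal_le_of_le_ofReal one_pos.le (by simpa using hQle)
  have hpt : ∀ᵐ x ∂lam, log (w x) + 1 - (Q x).toReal ≤ llr lam μ x := by
    filter_upwards [ae_mem_lam, hDpos, hDlt] with x hx hp hl
    have hy : 0 < (D x).toReal := ENNReal.toReal_pos hp.ne' hl.ne
    have hwx : 0 < w x := w_pos' ht x hx
    have hQx : (Q x).toReal = w x / (D x).toReal := by
      rw [hQ, ENNReal.toReal_div, ENNReal.toReal_ofReal hwx.le]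
    have hlog : log (w x / (D x).toReal) ≤ w x / (D x).toReal - 1 :=
      Real.log_le_sub_one_of_pos (div_pos hwx hy)
    rw [Real.log_div hwx.ne' hy.ne'] at hlog
    have : llr lam μ x = log (D x).toReal := rfl
    rw [this, hQx]
    linarith
  have hlogwint := logw_integrable ht
  have hlhs : Integrable (fun x => log (w x) + 1 - (Q x).toReal) lam :=
    (hlogwint.add (integrable_const 1)).sub hQint
  have hmono := integral_mono_ae hlhs hint hpt
  have e1 : ∫ a, (log (w a) + 1 - (Q a).toReal) ∂lam
      = ∫ a, (log (w a) + 1) ∂lam - ∫ a, (Q a).toReal ∂lam :=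
    integral_sub (hlogwint.add (integrable_const 1)) hQint
  have e2 : ∫ a, (log (w a) + 1) ∂lam = (∫ a, log (w a) ∂lam) + 1 := by
    rw [integral_add hlogwint (integrable_const 1), integral_const]
    simp
    rfl
  have e3 := logw_value ht
  rw [e1, e2] at hmono
  simp only [hw] at hmono e3 ⊢
  linarith

lemma rev_wit {t u : ℝ} (ht : Ffun t = u) :
    ∃ μ : Measure ℝ, IsProbabilityMeasure μ ∧ μ (Set.Icc (0:ℝ) 1) = 1 ∧ (∫ x, x ∂μ) = u ∧
      lam ≪ μ ∧ Integrable (llr lam μ) lam ∧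
      ∫ x, llr lam μ x ∂lam = t*(u-1) + log (1+t*u) := by
  have hprob := lam_prob
  set w : ℝ → ℝ := fun x => 1 + t*u - t*x with hw
  set φ : ℝ → ℝ := fun x => - log (w x) with hφ
  have hφcont : ContinuousOn (fun x => exp (φ x)) (Set.Icc (0:ℝ) 1) :=
    Real.continuous_exp.comp_continuousOn
      ((Real.continuousOn_log.comp w_cont.continuousOn
        (fun x hx => (w_pos' ht x hx).ne')).neg)
  have hφint : Integrable (fun x => exp (φ x)) lam := hφcont.integrableOn_Icc
  have hexpφ : Set.EqOn (fun x => exp (φ x)) (fun x => (w x)⁻¹) (Set.Icc (0:ℝ) 1) := by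
    intro x hx
    simp only [hφ]
    rw [Real.exp_neg, Real.exp_log (w_pos' ht x hx)]
  have hwinv_cont : ContinuousOn (fun x => (w x)⁻¹) (Set.Icc (0:ℝ) 1) :=
    w_cont.continuousOn.inv₀ (fun x hx => (w_pos' ht x hx).ne')
  have hwinv_int : Integrable (fun x => (w x)⁻¹) lam := hwinv_cont.integrableOn_Icc
  have hwinv_val : ∫ x, (w x)⁻¹ ∂lam = 1 := by
    rcases eq_or_ne t 0 with rfl | htne
    · simp [hw]
    · have hu' : exp t/(exp t - 1) - 1/t = u := by rw [← ht]; simp [Ffun, htne]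
      rw [integral_lam, int_inv_lin t (1+t*u) htne (fun x hx => w_pos' ht x hx)]
      exact val_I1 htne hu'
  have hZφ : ∫ x, exp (φ x) ∂lam = 1 := by
    rw [setIntegral_congr_fun measurableSet_Icc hexpφ]
    exact hwinv_val
  have hμP : IsProbabilityMeasure (Measure.tilted lam φ) := isProbabilityMeasure_tilted hφint
  have hIcc : (Measure.tilted lam φ) (Set.Icc (0:ℝ) 1) = 1 := tilted_Icc_one hφint
  have hmean : ∫ x, x ∂(Measure.tilted lam φ) = u := by
    rw [integral_tilted, hZφ]
    simp only [div_one, smul_eq_mul]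
    have heq : Set.EqOn (fun x => exp (φ x) * x) (fun x => x * (w x)⁻¹) (Set.Icc (0:ℝ) 1) := by
      intro x hx
      simp only [hexpφ hx]
      ring
    rw [setIntegral_congr_fun measurableSet_Icc heq]
    rcases eq_or_ne t 0 with rfl | htne
    · have hu : u = 1/2 := by simpa [Ffun] using ht.symm
      have : Set.EqOn (fun x : ℝ => x * (w x)⁻¹) (fun x : ℝ => x) (Set.Icc (0:ℝ) 1) := by
        intro x hx; simp [hw]
      rw [setIntegral_congr_fun measurableSet_Icc this, integral_lam]
      simp [integral_id, hu]
    · have heq2 : Set.EqOn (fun x => x * (w x)⁻¹)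
          (fun x => ((1+t*u) * (w x)⁻¹ - 1)/t) (Set.Icc (0:ℝ) 1) := by
        intro x hx
        have hwx := (w_pos' ht x hx).ne'
        simp only [hw]
        rw [eq_div_iff htne]
        have hv' : (1+t*u-t*x)*(1+t*u-t*x)⁻¹ = 1 := mul_inv_cancel₀ hwx
        linear_combination (-1:ℝ) * hv'
      rw [setIntegral_congr_fun measurableSet_Icc heq2]
      have : ∫ x, ((1+t*u) * (w x)⁻¹ - 1)/t ∂lam
          = ((1+t*u) * ∫ x, (w x)⁻¹ ∂lam - 1)/t := by
        rw [integral_div, integral_sub (hwinv_int.const_mul _) (integrable_const 1),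
          integral_const_mul, integral_const]
        simp
      rw [this, hwinv_val]
      field_simp
      ring
  have hacμ : lam ≪ Measure.tilted lam φ := absolutelyContinuous_tilted hφint
  have hllr : llr lam (Measure.tilted lam φ) =ᵐ[lam] fun x => log (w x) := by
    have h1 := llr_tilted_right (μ := lam) (ν := lam) Measure.AbsolutelyContinuous.rfl hφint
    filter_upwards [h1, llr_self_zero] with x hx hx0
    rw [hx, hx0, hZφ]
    simp [hφ]
  have hint : Integrable (llr lam (Measure.tilted lam φ)) lam :=
    Integrable.congr (logw_integrable ht) hllr.symm
  refine ⟨Measure.tilted lam φ, hμP, hIcc, hmean, hacμ, hint, ?_⟩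
  rw [integral_congr_ae hllr]
  exact logw_value ht

end Aux

/-- Let λ be Lebesgue measure on [0,1]. For every u ∈ (0,1), the reverse
and forward relative-entropy projections onto the probability measures on [0,1] with mean
u have the same value, namely `F⁻¹(u)(u−1) + log(1 + F⁻¹(u)u)`. -/
theorem stmt_16 (u : ℝ) (hu : u ∈ Set.Ioo (0 : ℝ) 1) :
    (⨅ (μ : Measure ℝ) (_ : IsProbabilityMeasure μ) (_ : μ (Set.Icc 0 1) = 1)
        (_ : ∫ x, x ∂μ = u), relEnt (volume.restrict (Set.Icc 0 1)) μ)
      = (⨅ (μ : Measure ℝ) (_ : IsProbabilityMeasure μ) (_ : μ (Set.Icc 0 1) = 1)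
          (_ : ∫ x, x ∂μ = u), relEnt μ (volume.restrict (Set.Icc 0 1))) ∧
    (⨅ (μ : Measure ℝ) (_ : IsProbabilityMeasure μ) (_ : μ (Set.Icc 0 1) = 1)
        (_ : ∫ x, x ∂μ = u), relEnt μ (volume.restrict (Set.Icc 0 1)))
      = ((Function.invFun Ffun u * (u - 1)
          + Real.log (1 + Function.invFun Ffun u * u) : ℝ) : EReal) := by
  have hrange := Ffun_range hu
  have ht : Ffun (Function.invFun Ffun u) = u := Function.invFun_eq hrange
  set t := Function.invFun Ffun u with htdef
  have hprob := lam_prob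
  have hfwd : (⨅ (μ : Measure ℝ) (_ : IsProbabilityMeasure μ) (_ : μ (Set.Icc 0 1) = 1)
      (_ : ∫ x, x ∂μ = u), relEnt μ (volume.restrict (Set.Icc 0 1)))
      = ((t*(u-1) + Real.log (1+t*u) : ℝ) : EReal) := by
    apply le_antisymm
    · obtain ⟨μ0, hP, hIcc, hmean, hac, hintg, hval⟩ := fwd_wit ht
      refine iInf_le_of_le μ0 (iInf_le_of_le hP (iInf_le_of_le hIcc (iInf_le_of_le hmean ?_)))
      unfold relEnt
      rw [if_pos ⟨hac, hintg⟩, hval]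
    · refine le_iInf fun μ => le_iInf fun hP => le_iInf fun hIcc => le_iInf fun hmean => ?_
      haveI := hP
      unfold relEnt
      split_ifs with h
      · exact EReal.coe_le_coe_iff.mpr (fwd_lb ht hIcc hmean h.1 h.2)
      · exact le_top
  have hrev : (⨅ (μ : Measure ℝ) (_ : IsProbabilityMeasure μ) (_ : μ (Set.Icc 0 1) = 1)
      (_ : ∫ x, x ∂μ = u), relEnt (volume.restrict (Set.Icc 0 1)) μ)
      = ((t*(u-1) + Real.log (1+t*u) : ℝ) : EReal) := by
    apply le_antisymm
    · obtain ⟨μ0, hP, hIcc, hmean, hac, hintg, hval⟩ := rev_wit ht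
      refine iInf_le_of_le μ0 (iInf_le_of_le hP (iInf_le_of_le hIcc (iInf_le_of_le hmean ?_)))
      unfold relEnt
      rw [if_pos ⟨hac, hintg⟩, hval]
    · refine le_iInf fun μ => le_iInf fun hP => le_iInf fun hIcc => le_iInf fun hmean => ?_
      haveI := hP
      unfold relEnt
      split_ifs with h
      · exact EReal.coe_le_coe_iff.mpr (rev_lb ht hIcc hmean h.1 h.2)
      · exact le_top
  exact ⟨hrev.trans hfwd.symm, hfwd⟩
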